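/- If v is obtained from w by deleting all positions not in a set S ⊆ dom(w) containing position 1, and S contains Pos_w(RK) for every ranker RK in a finite set R closed under taking ranker prefixes, then for every RK ∈ R with Pos_w(RK) ≠ ⊥, f(Pos_w(RK)) = Pos_v(RK), where f : S → dom(v) is the order-isomorphism mapping each surviving position of w to its position in v; moreover Pos_w(RK)=⊥ iff Pos_v(RK)=⊥. -/

import Mathlib

/-- Letter at 1-based position `i` of word `w`. -/
def letterAt {A : Type} (w : List A) (i : ℕ) : Option A := w[i - 1]?

variable {A : Type} [DecidableEq A]

/-- Least position `j` of `w` with `i < j` and `w[j] = a`. -/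
def findNext (w : List A) (a : A) (i : ℕ) : Option ℕ :=
  (List.range' 1 w.length).find? (fun j => decide (i < j ∧ letterAt w j = some a))

/-- Greatest position `j` of `w` with `j < i` and `w[j] = a`. -/
def findPrev (w : List A) (a : A) (i : ℕ) : Option ℕ :=
  ((List.range' 1 w.length).reverse).find? (fun j => decide (j < i ∧ letterAt w j = some a))

/-- Least position `j` of `w` with `i ≤ j` and `w[j] = a`. -/
def findNextW (w : List A) (a : A) (i : ℕ) : Option ℕ :=
  (List.range' 1 w.length).find? (fun j => decide (i ≤ j ∧ letterAt w j = some a))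

/-- Greatest position `j` of `w` with `j ≤ i` and `w[j] = a`. -/
def findPrevW (w : List A) (a : A) (i : ℕ) : Option ℕ :=
  ((List.range' 1 w.length).reverse).find? (fun j => decide (j ≤ i ∧ letterAt w j = some a))

/-- Ranker operators. -/
inductive ROp (A : Type) where
  | Xa (a : A) | Ya (a : A) | WXa (a : A) | WYa (a : A)
  | next | prev | SP | EP
deriving DecidableEq

/-- One deterministic search step from position `i`. -/
def rstep (w : List A) (i : ℕ) : ROp A → Option ℕ
  | .Xa a => findNext w a i
  | .Ya a => findPrev w a i
  | .WXa a => findNextW w a i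
  | .WYa a => findPrevW w a i
  | .next => if i + 1 ≤ w.length then some (i + 1) else none
  | .prev => if 2 ≤ i then some (i - 1) else none
  | .SP => some 1
  | .EP => if 1 ≤ w.length then some w.length else none

/-- A ranker is a list of operators applied left to right (ending in ⊤).
`Pos w i rk` is its unique end position (`none` = ⊥), starting at `i`. -/
def Pos (w : List A) (i : ℕ) (rk : List (ROp A)) : Option ℕ :=
  rk.foldlM (fun j op => rstep w j op) i

/-- Formulas of TL[X_a,Y_a]. -/
inductive TLF (A : Type) where
  | atom (a : A) | top
  | Xa (a : A) (φ : TLF A) | Ya (a : A) (φ : TLF A)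
  | WXa (a : A) (φ : TLF A) | WYa (a : A) (φ : TLF A)
  | next (φ : TLF A) | prev (φ : TLF A)
  | SP (φ : TLF A) | EP (φ : TLF A)
  | or (φ ψ : TLF A) | not (φ : TLF A)
deriving DecidableEq

/-- Semantics of TL[X_a,Y_a] over nonempty finite words, positions 1-based. -/
def Sat (w : List A) : ℕ → TLF A → Prop
  | i, .atom a => letterAt w i = some a
  | _, .top => True
  | i, .Xa a φ => ∃ j, i < j ∧ letterAt w j = some a ∧
      (∀ k, i < k → k < j → letterAt w k ≠ some a) ∧ Sat w j φ
  | i, .Ya a φ => ∃ j, j < i ∧ letterAt w j = some a ∧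
      (∀ k, j < k → k < i → letterAt w k ≠ some a) ∧ Sat w j φ
  | i, .WXa a φ => ∃ j, i ≤ j ∧ letterAt w j = some a ∧
      (∀ k, i ≤ k → k < j → letterAt w k ≠ some a) ∧ Sat w j φ
  | i, .WYa a φ => ∃ j, j ≤ i ∧ letterAt w j = some a ∧
      (∀ k, j < k → k ≤ i → letterAt w k ≠ some a) ∧ Sat w j φ
  | i, .next φ => i + 1 ≤ w.length ∧ Sat w (i + 1) φ
  | i, .prev φ => 2 ≤ i ∧ Sat w (i - 1) φ
  | _, .SP φ => Sat w 1 φ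
  | _, .EP φ => Sat w w.length φ
  | i, .or φ ψ => Sat w i φ ∨ Sat w i ψ
  | i, .not φ => ¬ Sat w i φ

/-- Size: number of operators and atomic formulas. -/
def TLF.size : TLF A → ℕ
  | .atom _ => 1 | .top => 1
  | .Xa _ φ => φ.size + 1 | .Ya _ φ => φ.size + 1
  | .WXa _ φ => φ.size + 1 | .WYa _ φ => φ.size + 1
  | .next φ => φ.size + 1 | .prev φ => φ.size + 1
  | .SP φ => φ.size + 1 | .EP φ => φ.size + 1
  | .or φ ψ => φ.size + ψ.size + 1 | .not φ => φ.size + 1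

/-- The subword of `w` keeping exactly the (1-based) positions in `S`. -/
def restrictPosF (w : List A) (S : Finset ℕ) : List A :=
  w.zipIdx.filterMap (fun p => if p.2 + 1 ∈ S then some p.1 else none)

/-- The order isomorphism from surviving positions of `w` onto positions of the
restricted word: a surviving position `p` is mapped to the number of surviving
positions `≤ p`. -/
def posMap (S : Finset ℕ) (p : ℕ) : ℕ := (S.filter (fun q => q ≤ p)).card

/-! `posMap S` is strictly monotone on `S` and carries the surviving positions among `1, …, n`,
listed in order, onto `1, …, posMap S n`, preserving letters. Every search operator is a
`find?` over the positions of the word, scanned forwards or backwards, so when its answer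
survives the deletion the same search in the restricted word, started at the image of the start,
answers with the image of the answer; `next`, `prev`, `SP` and `EP` are checked directly.
Prefix closure of `R` keeps every intermediate position of a ranker in `S`, so induction along
the ranker gives `Pos v 1 rk = (Pos w 1 rk).map (posMap S)`. -/

namespace List

theorem find?_and_eq_find? {α : Type*} {l : List α} {p q : α → Bool}
    (h : ∀ x, l.find? q = some x → p x) :
    l.find? (fun x => p x && q x) = l.find? q := by
  induction l with
  | nil => rfl
  | cons a l ih => by_cases hqa : q a <;> simp_all

theorem find?_map_filter {α β : Type*} {l : List α} {s P : α → Bool}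
    {Q : β → Bool} {g : α → β} (hPQ : ∀ x ∈ l, s x → Q (g x) = P x)
    (hs : ∀ x, l.find? P = some x → s x) :
    ((l.filter s).map g).find? Q = (l.find? P).map g := by
  rw [find?_map, find?_filter, ← find?_and_eq_find? hs]
  congr 1
  refine find?_congr fun x hx => ?_
  by_cases hsx : s x <;> simp [hsx, hPQ x hx]

end List

section PosMap

variable {S : Finset ℕ}

theorem posMap_strictMonoOn (S : Finset ℕ) : StrictMonoOn (posMap S) S := by
  intro p _ q hq hpq
  refine Finset.card_lt_card (Finset.ssubset_iff_of_subset ?_ |>.2 ⟨q, ?_, ?_⟩)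
  · exact Finset.monotone_filter_right S fun _ _ h => h.trans hpq.le
  · simpa using hq
  · simp [hpq]

theorem posMap_mono (S : Finset ℕ) : Monotone (posMap S) :=
  fun _ _ hpq => Finset.card_le_card (Finset.monotone_filter_right S fun _ _ h => h.trans hpq)

theorem posMap_pos {p : ℕ} (hp : p ∈ S) : 0 < posMap S p :=
  Finset.card_pos.2 ⟨p, by simp [hp]⟩

theorem posMap_zero (hS : 0 ∉ S) : posMap S 0 = 0 := by
  simp only [posMap, nonpos_iff_eq_zero, Finset.filter_eq', if_neg hS, Finset.card_empty]

theorem posMap_succ (S : Finset ℕ) (n : ℕ) :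
    posMap S (n + 1) = posMap S n + if n + 1 ∈ S then 1 else 0 := by
  simp only [posMap, Nat.le_succ_iff, Finset.filter_or]
  rw [Finset.card_union_of_disjoint]
  · split_ifs with h <;> simp [Finset.filter_eq', h]
  · exact Finset.disjoint_filter.2 fun _ _ h h' => by omega

theorem posMap_succ_of_mem {n : ℕ} (h : n + 1 ∈ S) : posMap S (n + 1) = posMap S n + 1 := by
  rw [posMap_succ, if_pos h]

theorem posMap_succ_of_notMem {n : ℕ} (h : n + 1 ∉ S) : posMap S (n + 1) = posMap S n := by
  rw [posMap_succ, if_neg h, Nat.add_zero]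

theorem posMap_one (hS : 0 ∉ S) (h1 : 1 ∈ S) : posMap S 1 = 1 := by
  rw [posMap_succ_of_mem h1, posMap_zero hS]

theorem map_posMap_filter_range' (hS : 0 ∉ S) (n : ℕ) :
    ((List.range' 1 n).filter (· ∈ S)).map (posMap S) = List.range' 1 (posMap S n) := by
  induction n with
  | zero => simp [posMap_zero hS]
  | succ n ih =>
    rw [List.range'_1_concat, List.filter_append, List.map_append, ih, Nat.add_comm 1 n]
    by_cases h : n + 1 ∈ S
    · simp [h, posMap_succ_of_mem h, List.range'_1_concat, Nat.add_comm 1]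
    · simp [h, posMap_succ_of_notMem h]

end PosMap

section Restrict

variable {α : Type} {S : Finset ℕ}

theorem restrictPosF_append_singleton (w : List α) (a : α) (S : Finset ℕ) :
    restrictPosF (w ++ [a]) S = restrictPosF w S ++ if w.length + 1 ∈ S then [a] else [] := by
  simp only [restrictPosF, List.zipIdx_append, List.filterMap_append]
  split_ifs <;> simp_all

theorem length_restrictPosF (hS : 0 ∉ S) (w : List α) :
    (restrictPosF w S).length = posMap S w.length := by
  induction w using List.reverseRecOn with
  | nil => simp [restrictPosF, posMap_zero hS]
  | append_singleton w a ih =>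
    rw [restrictPosF_append_singleton, List.length_append, ih, List.length_append,
      List.length_singleton, posMap_succ]
    split_ifs <;> rfl

theorem letterAt_restrictPosF (hS : 0 ∉ S) {w : List α} {x : ℕ} (hx : x ∈ S)
    (hxw : x ≤ w.length) : letterAt (restrictPosF w S) (posMap S x) = letterAt w x := by
  induction w using List.reverseRecOn with
  | nil => simp [restrictPosF, letterAt]
  | append_singleton w a ih =>
    rw [List.length_append, List.length_singleton] at hxw
    have hv := length_restrictPosF hS w
    rw [restrictPosF_append_singleton]
    rcases Nat.lt_or_eq_of_le hxw with hlt | rfl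
    · have hxv : posMap S x ≤ (restrictPosF w S).length := hv ▸ posMap_mono S (by omega)
      have hx0 : 0 < x := Nat.pos_of_ne_zero fun h => hS (h ▸ hx)
      have hpos := posMap_pos hx
      simp only [letterAt] at ih ⊢
      rw [List.getElem?_append_left (by omega), List.getElem?_append_left (by omega)]
      exact ih (by omega)
    · simp [letterAt, hx, posMap_succ_of_mem hx, hv]

variable {w : List α} {P Q : ℕ → Bool}

theorem find?_range'_restrictPosF (hS : 0 ∉ S)
    (hPQ : ∀ x ∈ S, x ≤ w.length → Q (posMap S x) = P x)
    (hP : ∀ x, (List.range' 1 w.length).find? P = some x → x ∈ S) :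
    (List.range' 1 (restrictPosF w S).length).find? Q
      = ((List.range' 1 w.length).find? P).map (posMap S) := by
  rw [length_restrictPosF hS, ← map_posMap_filter_range' hS]
  refine List.find?_map_filter (fun x hx hxS => ?_) (fun x hx => by simpa using hP x hx)
  exact hPQ x (by simpa using hxS) (by have := List.mem_range'_1.1 hx; omega)

theorem find?_reverse_range'_restrictPosF (hS : 0 ∉ S)
    (hPQ : ∀ x ∈ S, x ≤ w.length → Q (posMap S x) = P x)
    (hP : ∀ x, (List.range' 1 w.length).reverse.find? P = some x → x ∈ S) :
    (List.range' 1 (restrictPosF w S).length).reverse.find? Q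
      = ((List.range' 1 w.length).reverse.find? P).map (posMap S) := by
  rw [length_restrictPosF hS, ← map_posMap_filter_range' hS, ← List.map_reverse,
    ← List.filter_reverse]
  refine List.find?_map_filter (fun x hx hxS => ?_) (fun x hx => by simpa using hP x hx)
  exact hPQ x (by simpa using hxS) (by have := List.mem_range'_1.1 (List.mem_reverse.1 hx); omega)

end Restrict

theorem rstep_restrictPosF {w : List A} {S : Finset ℕ} (hS : 0 ∉ S) (hS1 : 1 ∈ S)
    {p : ℕ} (hp : p ∈ S) (op : ROp A) (hstep : ∀ q, rstep w p op = some q → q ∈ S) :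
    rstep (restrictPosF w S) (posMap S p) op = (rstep w p op).map (posMap S) := by
  have hmono := posMap_strictMonoOn S
  have hv := length_restrictPosF hS w
  cases op with
  | Xa a =>
    refine find?_range'_restrictPosF hS (fun x hx hxw => ?_) hstep
    simp [hmono.lt_iff_lt hp hx, letterAt_restrictPosF hS hx hxw]
  | Ya a =>
    refine find?_reverse_range'_restrictPosF hS (fun x hx hxw => ?_) hstep
    simp [hmono.lt_iff_lt hx hp, letterAt_restrictPosF hS hx hxw]
  | WXa a =>
    refine find?_range'_restrictPosF hS (fun x hx hxw => ?_) hstep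
    simp [hmono.le_iff_le hp hx, letterAt_restrictPosF hS hx hxw]
  | WYa a =>
    refine find?_reverse_range'_restrictPosF hS (fun x hx hxw => ?_) hstep
    simp [hmono.le_iff_le hx hp, letterAt_restrictPosF hS hx hxw]
  | next =>
    by_cases hpw : p + 1 ≤ w.length
    · have hp1 : p + 1 ∈ S := hstep (p + 1) (by simp [rstep, hpw])
      have hle : posMap S p + 1 ≤ posMap S w.length :=
        posMap_succ_of_mem hp1 ▸ posMap_mono S hpw
      simp [rstep, hpw, hv, hle, posMap_succ_of_mem hp1]
    · have hle : posMap S w.length ≤ posMap S p := posMap_mono S (by omega)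
      simp [rstep, hpw, hv, show ¬posMap S p + 1 ≤ posMap S w.length by omega]
  | prev =>
    obtain ⟨n, rfl⟩ := Nat.exists_eq_add_one_of_ne_zero fun h => hS (h ▸ hp)
    rw [posMap_succ_of_mem hp]
    by_cases hn : 1 ≤ n
    · have := posMap_pos (hstep n (by simp [rstep, hn]))
      simp [rstep, hn, show 1 ≤ posMap S n by omega]
    · obtain rfl : n = 0 := by omega
      simp [rstep, posMap_zero hS]
  | SP => simp [rstep, posMap_one hS hS1]
  | EP =>
    by_cases hw : 1 ≤ w.length
    · have := posMap_pos (hstep w.length (by simp [rstep, hw]))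
      simp [rstep, hw, hv, show 1 ≤ posMap S w.length by omega]
    · simp [rstep, hv, show w.length = 0 by omega, posMap_zero hS]

theorem pos_append_singleton (w : List A) (i : ℕ) (rk : List (ROp A)) (op : ROp A) :
    Pos w i (rk ++ [op]) = (Pos w i rk).bind (rstep w · op) := by
  simp [Pos, List.foldlM_append]

theorem pos_restrictPosF {w : List A} {S : Finset ℕ} {R : Set (List (ROp A))}
    (hS : 0 ∉ S) (hS1 : 1 ∈ S)
    (hclosed : ∀ rk op, rk ++ [op] ∈ R → rk ∈ R)
    (hpos : ∀ rk ∈ R, ∀ p, Pos w 1 rk = some p → p ∈ S) :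
    ∀ rk ∈ R, Pos (restrictPosF w S) 1 rk = (Pos w 1 rk).map (posMap S) := by
  intro rk
  induction rk using List.reverseRecOn with
  | nil => simp [Pos, posMap_one hS hS1]
  | append_singleton rk op ih =>
    intro hrk
    have hrk' := hclosed rk op hrk
    rw [pos_append_singleton, pos_append_singleton, ih hrk']
    cases hp : Pos w 1 rk with
    | none => rfl
    | some p =>
      refine rstep_restrictPosF hS hS1 (hpos rk hrk' p hp) op fun q hq => hpos _ hrk q ?_
      rw [pos_append_singleton, hp]
      exact hq

/-- If `v` is obtained from `w` by deleting all positions not in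
`S ⊆ dom(w)` with `1 ∈ S`, and `S` contains `Pos_w(RK)` for every ranker `RK` in a
finite, prefix-closed set `R`, then for every `RK ∈ R`: if `Pos_w(RK) = p ≠ ⊥` then
`Pos_v(RK) = f(p)` where `f` is the order isomorphism of `S` onto `dom(v)`;
moreover `Pos_w(RK) = ⊥` iff `Pos_v(RK) = ⊥`. -/
theorem deletion_preserves_ranker_positions
    (w : List A) (S : Finset ℕ) (R : Finset (List (ROp A)))
    (hS1 : (1 : ℕ) ∈ S) (hSdom : ∀ p ∈ S, 1 ≤ p ∧ p ≤ w.length)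
    (hclosed : ∀ (rk : List (ROp A)) (op : ROp A), rk ++ [op] ∈ R → rk ∈ R)
    (hpos : ∀ rk ∈ R, ∀ p, Pos w 1 rk = some p → p ∈ S) :
    ∀ rk ∈ R,
      (∀ p, Pos w 1 rk = some p →
        Pos (restrictPosF w S) 1 rk = some (posMap S p)) ∧
      (Pos w 1 rk = none ↔ Pos (restrictPosF w S) 1 rk = none) := by
  intro rk hrk
  have hS : 0 ∉ S := fun h => by simpa using (hSdom 0 h).1
  rw [pos_restrictPosF (R := R) hS hS1 hclosed hpos rk hrk]
  exact ⟨fun p hp => by rw [hp, Option.map_some], Option.map_eq_none_iff.symm⟩
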